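/- Let f : ℝⁿ → ℝ be differentiable, Π ⊆ ℝⁿ a nonempty closed convex set, x ∈ Π, μ̄ > 0, G ∈ ℝ^{n×n} symmetric positive semidefinite, and define Θ(y) := f(x) + ⟨∇f(x), y − x⟩ + (1/2)⟨y − x, G(y − x)⟩ + δ_Π(y), R(y) := μ̄[y − proj_Π(y − μ̄⁻¹(G(y − x) + ∇f(x)))], and r := μ̄[x − proj_Π(x − μ̄⁻¹∇f(x))]. Then for every y ∈ Π, dist(0, ∂Θ(y)) ≥ min{μ̄⁻¹, 1}·‖R(y)‖, where ∂Θ(y) := ∇f(x) + G(y − x) + N_Π(y). Consequently, for ς ∈ (0,1], if y ∈ Π satisfies dist(0, ∂Θ(y)) ≤ (min{μ̄⁻¹, 1}/2)·min{‖r‖, ‖r‖^{1+ς}}, then ‖R(y)‖ ≤ (1/2)·min{‖r‖, ‖r‖^{1+ς}}. -/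

import Mathlib

/-!
If `p` is the projection of `y - μ⁻¹ g` onto `Π` and `w ∈ N_Π(y)`, then with `d = y - p` the
variational inequality of the projection gives `μ ‖d‖² ≤ ⟪g, d⟫`, while `⟪w, d⟫ ≥ 0`; hence
`μ ‖d‖² ≤ ⟪g + w, d⟫ ≤ ‖g + w‖ ‖d‖`. With `g = ∇f(x) + G(y - x)` this bounds `‖R(y)‖ = μ ‖d‖` by
the norm of every element of `∂Θ(y)`, and the second claim follows by dividing by `min{μ⁻¹, 1}`.
-/

noncomputable section

/-- Identity reinterpretation of a coordinate vector as a point of Euclidean space. -/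
def toEuc {n : ℕ} (v : Fin n → ℝ) : EuclideanSpace ℝ (Fin n) := WithLp.toLp 2 v

/-- Normal cone of a convex set `S` at `x`. -/
def normalCone {n : ℕ} (S : Set (EuclideanSpace ℝ (Fin n)))
    (x : EuclideanSpace ℝ (Fin n)) : Set (EuclideanSpace ℝ (Fin n)) :=
  {v | ∀ y ∈ S, (inner ℝ v (y - x) : ℝ) ≤ 0}

/-- The Euclidean projection onto a (nonempty closed convex) set `S`. -/
def projCC {n : ℕ} (S : Set (EuclideanSpace ℝ (Fin n))) (w : EuclideanSpace ℝ (Fin n)) :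
    EuclideanSpace ℝ (Fin n) :=
  Classical.epsilon (fun y => y ∈ S ∧ ∀ z ∈ S, ‖y - w‖ ≤ ‖z - w‖)

open Metric InnerProductSpace

theorem mul_norm_sub_le_norm_add_of_inner_nonpos {E : Type*} [NormedAddCommGroup E]
    [InnerProductSpace ℝ E] {μ : ℝ} (hμ : 0 < μ) {y p g w : E}
    (hp : ⟪y - μ⁻¹ • g - p, y - p⟫_ℝ ≤ 0) (hw : ⟪w, p - y⟫_ℝ ≤ 0) :
    μ * ‖y - p‖ ≤ ‖g + w‖ := by
  set d := y - p
  have hpd : ⟪d - μ⁻¹ • g, d⟫_ℝ ≤ 0 := by rwa [sub_right_comm]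
  rw [inner_sub_left, real_inner_smul_left, real_inner_self_eq_norm_sq] at hpd
  have hgd : μ * ‖d‖ ^ 2 ≤ ⟪g, d⟫_ℝ := by
    have := mul_le_mul_of_nonneg_left (sub_nonpos.mp hpd) hμ.le
    rwa [← mul_assoc, mul_inv_cancel₀ hμ.ne', one_mul] at this
  have hwd : 0 ≤ ⟪w, d⟫_ℝ := by
    rw [← neg_sub, inner_neg_right] at hw
    linarith
  have hd : μ * ‖d‖ * ‖d‖ ≤ ‖g + w‖ * ‖d‖ :=
    calc μ * ‖d‖ * ‖d‖ = μ * ‖d‖ ^ 2 := by ring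
      _ ≤ ⟪g + w, d⟫_ℝ := by rw [inner_add_left]; linarith
      _ ≤ ‖g + w‖ * ‖d‖ := real_inner_le_norm _ _
  rcases (norm_nonneg d).eq_or_lt with h0 | h0
  · rw [← h0, mul_zero]
    exact norm_nonneg _
  · exact le_of_mul_le_mul_right hd h0

section Projection

variable {n : ℕ} {S : Set (EuclideanSpace ℝ (Fin n))}

theorem projCC_spec (hcl : IsClosed S) (hne : S.Nonempty) (w : EuclideanSpace ℝ (Fin n)) :
    projCC S w ∈ S ∧ ∀ z ∈ S, ‖projCC S w - w‖ ≤ ‖z - w‖ := by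
  apply Classical.epsilon_spec (p := fun y => y ∈ S ∧ ∀ z ∈ S, ‖y - w‖ ≤ ‖z - w‖)
  obtain ⟨y, hy, hdist⟩ := hcl.exists_infDist_eq_dist hne w
  refine ⟨y, hy, fun z hz => ?_⟩
  have := infDist_le_dist_of_mem (x := w) hz
  rwa [hdist, dist_comm, dist_comm w, dist_eq_norm, dist_eq_norm] at this

theorem inner_sub_projCC_nonpos (hcl : IsClosed S) (hconv : Convex ℝ S)
    (w : EuclideanSpace ℝ (Fin n)) {z : EuclideanSpace ℝ (Fin n)} (hz : z ∈ S) :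
    ⟪w - projCC S w, z - projCC S w⟫_ℝ ≤ 0 := by
  obtain ⟨hp, hmin⟩ := projCC_spec hcl ⟨z, hz⟩ w
  have : Nonempty S := ⟨⟨z, hz⟩⟩
  refine (norm_eq_iInf_iff_real_inner_le_zero hconv hp).mp (le_antisymm ?_ ?_) z hz
  · exact le_ciInf fun z' => by simpa only [norm_sub_rev] using hmin z' z'.2
  · exact ciInf_le ⟨0, fun _ ⟨_, h⟩ => h ▸ norm_nonneg _⟩ (⟨_, hp⟩ : S)

theorem mul_norm_sub_projCC_le (hcl : IsClosed S) (hconv : Convex ℝ S) {μ : ℝ} (hμ : 0 < μ)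
    (g : EuclideanSpace ℝ (Fin n)) {y w : EuclideanSpace ℝ (Fin n)} (hy : y ∈ S)
    (hw : w ∈ normalCone S y) :
    μ * ‖y - projCC S (y - μ⁻¹ • g)‖ ≤ ‖g + w‖ :=
  mul_norm_sub_le_norm_add_of_inner_nonpos hμ (inner_sub_projCC_nonpos hcl hconv _ hy)
    (hw _ (projCC_spec hcl ⟨y, hy⟩ _).1)

end Projection

theorem stmt12_general {n : ℕ} (f : EuclideanSpace ℝ (Fin n) → ℝ)
    (Pc : Set (EuclideanSpace ℝ (Fin n))) (hPccl : IsClosed Pc)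
    (hPcconv : Convex ℝ Pc)
    (x : EuclideanSpace ℝ (Fin n))
    (mubar : ℝ) (hmubar : 0 < mubar)
    (G : Matrix (Fin n) (Fin n) ℝ)
    (R : EuclideanSpace ℝ (Fin n) → EuclideanSpace ℝ (Fin n))
    (hR : ∀ y, R y = mubar • (y - projCC Pc
      (y - mubar⁻¹ • (toEuc (G.mulVec (y - x)) + gradient f x))))
    (r : EuclideanSpace ℝ (Fin n)) :
    (∀ y ∈ Pc,
      min mubar⁻¹ 1 * ‖R y‖ ≤
        Metric.infDist (0 : EuclideanSpace ℝ (Fin n))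
          {v | ∃ w ∈ normalCone Pc y, v = gradient f x + toEuc (G.mulVec (y - x)) + w}) ∧
    (∀ ς : ℝ, 0 < ς → ς ≤ 1 → ∀ y ∈ Pc,
      Metric.infDist (0 : EuclideanSpace ℝ (Fin n))
          {v | ∃ w ∈ normalCone Pc y, v = gradient f x + toEuc (G.mulVec (y - x)) + w} ≤
        min mubar⁻¹ 1 / 2 * min ‖r‖ (‖r‖ ^ (1 + ς)) →
      ‖R y‖ ≤ 1 / 2 * min ‖r‖ (‖r‖ ^ (1 + ς))) := by
  have lower_bound : ∀ y ∈ Pc, min mubar⁻¹ 1 * ‖R y‖ ≤ infDist 0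
      {v | ∃ w ∈ normalCone Pc y, v = gradient f x + toEuc (G.mulVec (y - x)) + w} := by
    intro y hy
    have hzero : (0 : EuclideanSpace ℝ (Fin n)) ∈ normalCone Pc y := fun _ _ => by simp
    refine (le_infDist ?_).mpr ?_
    · exact ⟨_, 0, hzero, rfl⟩
    rintro _ ⟨w, hw, rfl⟩
    calc min mubar⁻¹ 1 * ‖R y‖ ≤ ‖R y‖ :=
          mul_le_of_le_one_left (norm_nonneg _) (min_le_right _ _)
      _ ≤ ‖toEuc (G.mulVec (y - x)) + gradient f x + w‖ := by
          rw [hR, norm_smul, Real.norm_of_nonneg hmubar.le]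
          exact mul_norm_sub_projCC_le hPccl hPcconv hmubar _ hy hw
      _ = dist 0 (gradient f x + toEuc (G.mulVec (y - x)) + w) := by
          rw [dist_zero_left, add_comm (gradient f x)]
  refine ⟨lower_bound, fun ς _ _ y hy hsmall => ?_⟩
  have hmin : 0 < min mubar⁻¹ 1 := lt_min (inv_pos.mpr hmubar) one_pos
  exact le_of_mul_le_mul_left (by linarith [(lower_bound y hy).trans hsmall]) hmin

/-- with `∂Θ(y) = ∇f(x) + G(y−x) + N_Π(y)`,
`R(y) = μ̄[y − proj_Π(y − μ̄⁻¹(G(y−x) + ∇f(x)))]` and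
`r = μ̄[x − proj_Π(x − μ̄⁻¹∇f(x))]`, one has
`dist(0, ∂Θ(y)) ≥ min{μ̄⁻¹,1}·‖R(y)‖` for every `y ∈ Π`; consequently, for `ς ∈ (0,1]`, if
`dist(0, ∂Θ(y)) ≤ (min{μ̄⁻¹,1}/2)·min{‖r‖, ‖r‖^{1+ς}}` then
`‖R(y)‖ ≤ (1/2)·min{‖r‖, ‖r‖^{1+ς}}`. -/
theorem stmt12 {n : ℕ} (f : EuclideanSpace ℝ (Fin n) → ℝ) (hf : Differentiable ℝ f)
    (Pc : Set (EuclideanSpace ℝ (Fin n))) (hPcne : Pc.Nonempty) (hPccl : IsClosed Pc)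
    (hPcconv : Convex ℝ Pc)
    (x : EuclideanSpace ℝ (Fin n)) (hx : x ∈ Pc)
    (mubar : ℝ) (hmubar : 0 < mubar)
    (G : Matrix (Fin n) (Fin n) ℝ) (hGsym : G.IsSymm) (hG : G.PosSemidef)
    (R : EuclideanSpace ℝ (Fin n) → EuclideanSpace ℝ (Fin n))
    (hR : ∀ y, R y = mubar • (y - projCC Pc
      (y - mubar⁻¹ • (toEuc (G.mulVec (y - x)) + gradient f x))))
    (r : EuclideanSpace ℝ (Fin n))
    (hr : r = mubar • (x - projCC Pc (x - mubar⁻¹ • gradient f x))) :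
    (∀ y ∈ Pc,
      min mubar⁻¹ 1 * ‖R y‖ ≤
        Metric.infDist (0 : EuclideanSpace ℝ (Fin n))
          {v | ∃ w ∈ normalCone Pc y, v = gradient f x + toEuc (G.mulVec (y - x)) + w}) ∧
    (∀ ς : ℝ, 0 < ς → ς ≤ 1 → ∀ y ∈ Pc,
      Metric.infDist (0 : EuclideanSpace ℝ (Fin n))
          {v | ∃ w ∈ normalCone Pc y, v = gradient f x + toEuc (G.mulVec (y - x)) + w} ≤
        min mubar⁻¹ 1 / 2 * min ‖r‖ (‖r‖ ^ (1 + ς)) →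
      ‖R y‖ ≤ 1 / 2 * min ‖r‖ (‖r‖ ^ (1 + ς))) :=
  stmt12_general f Pc hPccl hPcconv x mubar hmubar G R hR r

end
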